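/- arXiv:math/0409167 — 4 statements merged into one kernel-verified Lean document; each statement's English description precedes it below -/
import Mathlib

section
/- For n ≥ 2 and all x, y ∈ V, the contractions by the two-vector satisfy (Ix ∧ y) ⌟ ψ₊ = −(x ∧ y) ⌟ ψ₋. -/
noncomputable section

open scoped RealInnerProductSpace
open Function

namespace SUnPaper

variable {V : Type*} [NormedAddCommGroup V] [InnerProductSpace ℝ V]

/-- Wedge product of real-valued alternating forms. -/
def wedge {p q : ℕ} (a : V [⋀^Fin p]→ₗ[ℝ] ℝ) (b : V [⋀^Fin q]→ₗ[ℝ] ℝ) :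
    V [⋀^Fin (p + q)]→ₗ[ℝ] ℝ :=
  (((TensorProduct.lid ℝ ℝ).toLinearMap).compAlternatingMap (a.domCoprod b)).domDomCongr
    finSumFinEquiv

/-- Wedge product of complex-valued (ℝ-multilinear) alternating forms. -/
def cwedge {p q : ℕ} (a : V [⋀^Fin p]→ₗ[ℝ] ℂ) (b : V [⋀^Fin q]→ₗ[ℝ] ℂ) :
    V [⋀^Fin (p + q)]→ₗ[ℝ] ℂ :=
  ((LinearMap.mul' ℝ ℂ).compAlternatingMap (a.domCoprod b)).domDomCongr finSumFinEquiv

/-- The one-form `⟪·, x⟫` associated to a vector `x` via the metric. -/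
def oneForm (x : V) : V [⋀^Fin 1]→ₗ[ℝ] ℝ :=
  AlternatingMap.ofSubsingleton ℝ V ℝ 0 ((innerₗ V).flip x)

/-- A complex-valued one-form from an `ℝ`-linear map into `ℂ`. -/
def cOneForm (f : V →ₗ[ℝ] ℂ) : V [⋀^Fin 1]→ₗ[ℝ] ℂ :=
  AlternatingMap.ofSubsingleton ℝ V ℂ 0 f

/-- The complex one-form `x + i·y`, i.e. `w ↦ ⟪w, x⟫ + i ⟪w, y⟫`. -/
def cplxPair (x y : V) : V →ₗ[ℝ] ℂ :=
  Complex.ofRealAm.toLinearMap ∘ₗ ((innerₗ V).flip x)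
    + Complex.I • (Complex.ofRealAm.toLinearMap ∘ₗ ((innerₗ V).flip y))

/-- Iterated wedge of complex one-forms. -/
def cprod : ∀ (k : ℕ), (Fin k → (V [⋀^Fin 1]→ₗ[ℝ] ℂ)) → V [⋀^Fin k]→ₗ[ℝ] ℂ
  | 0, _ => AlternatingMap.constOfIsEmpty ℝ V (Fin 0) 1
  | (k + 1), f => cwedge (cprod k (f ∘ Fin.castSucc)) (f (Fin.last k))

/-- The complex volume form `Ψ = e₁ℂ ∧ ⋯ ∧ eₙℂ` of the SU(n)-structure determined by
`I` and the adapted basis `e₁, …, eₙ, Ie₁, …, Ieₙ`. -/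
def Psi (n : ℕ) (J : V →ₗ[ℝ] V) (e : Fin n → V) : V [⋀^Fin n]→ₗ[ℝ] ℂ :=
  cprod n fun j => cOneForm (cplxPair (e j) (J (e j)))

/-- `ψ₊ = Re (e₁ℂ ∧ ⋯ ∧ eₙℂ)`. -/
def psiP (n : ℕ) (J : V →ₗ[ℝ] V) (e : Fin n → V) : V [⋀^Fin n]→ₗ[ℝ] ℝ :=
  Complex.reLm.compAlternatingMap (Psi n J e)

/-- `ψ₋ = Im (e₁ℂ ∧ ⋯ ∧ eₙℂ)`. -/
def psiM (n : ℕ) (J : V →ₗ[ℝ] V) (e : Fin n → V) : V [⋀^Fin n]→ₗ[ℝ] ℝ :=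
  Complex.imLm.compAlternatingMap (Psi n J e)

/-- Interior product `x ⌟ b` of a `p`-form by a vector. -/
def ic : ∀ {p : ℕ}, V → (V [⋀^Fin p]→ₗ[ℝ] ℝ) → V [⋀^Fin (p - 1)]→ₗ[ℝ] ℝ
  | 0, _, _ => 0
  | (_ + 1), x, a => a.curryLeft x

/-- `k`-th power `ω^k = ω ∧ ⋯ ∧ ω`. -/
def wpow (ω : V [⋀^Fin 2]→ₗ[ℝ] ℝ) : ∀ k : ℕ, V [⋀^Fin (2 * k)]→ₗ[ℝ] ℝ
  | 0 => AlternatingMap.constOfIsEmpty ℝ V (Fin 0) 1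
  | (k + 1) => wedge (wpow ω k) ω

/-- Inner product of `p`-forms: `⟨a,c⟩ = (1/p!) Σ a(f_{i₁},…) c(f_{i₁},…)`. -/
def formInner {ι : Type*} [Fintype ι] (B : ι → V) {p : ℕ}
    (a c : V [⋀^Fin p]→ₗ[ℝ] ℝ) : ℝ :=
  (p.factorial : ℝ)⁻¹ * ∑ f : Fin p → ι, a (fun i => B (f i)) * c (fun i => B (f i))

/-- The space `⟦λ^{p,0}⟧`: real `p`-forms with `I₍ᵢ₎I₍ⱼ₎ b = -b` for all `i < j`. -/
def IsLam (J : V →ₗ[ℝ] V) {p : ℕ} (a : V [⋀^Fin p]→ₗ[ℝ] ℝ) : Prop :=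
  ∀ (v : Fin p → V) (i j : Fin p), i < j →
    a (Function.update (Function.update v i (J (v i))) j (J (v j))) = - a v


/-- Auxiliary: `J`-complex-linearity in every slot. -/
def IsJLin (J : V →ₗ[ℝ] V) {p : ℕ} (a : V [⋀^Fin p]→ₗ[ℝ] ℂ) : Prop :=
  ∀ (v : Fin p → V) (i : Fin p),
    a (Function.update v i (J (v i))) = Complex.I * a v

lemma isJLin_cwedge {p q : ℕ} (J : V →ₗ[ℝ] V) (a : V [⋀^Fin p]→ₗ[ℝ] ℂ)
    (b : V [⋀^Fin q]→ₗ[ℝ] ℂ) (ha : IsJLin J a) (hb : IsJLin J b) :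
    IsJLin J (cwedge a b) := by
  intro v k
  show (LinearMap.mul' ℝ ℂ) ((a.domCoprod b) ((Function.update v k (J (v k))) ∘ finSumFinEquiv))
      = Complex.I * (LinearMap.mul' ℝ ℂ) ((a.domCoprod b) (v ∘ finSumFinEquiv))
  rw [Function.update_comp_equiv]
  set w : Fin p ⊕ Fin q → V := v ∘ finSumFinEquiv with hw
  have hks : v k = w (finSumFinEquiv.symm k) := by simp [hw]
  rw [hks]
  set s := finSumFinEquiv.symm k
  clear_value s
  simp only [AlternatingMap.domCoprod_apply, MultilinearMap.sum_apply, map_sum, Finset.mul_sum]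
  refine Finset.sum_congr rfl fun σ _ => ?_
  induction σ using Quotient.inductionOn' with
  | h σ =>
    rw [AlternatingMap.domCoprod.summand_mk'']
    simp only [MultilinearMap.smul_apply, MultilinearMap.domDomCongr_apply,
      MultilinearMap.domCoprod_apply, AlternatingMap.coe_multilinearMap]
    rcases hs : σ⁻¹ s with i₀ | i₀
    · have hσs : σ (Sum.inl i₀) = s := by rw [← hs]; simp
      have h1 : (fun i => Function.update w s (J (w s)) (σ (Sum.inl i)))
          = Function.update (fun i => w (σ (Sum.inl i))) i₀ (J (w (σ (Sum.inl i₀)))) := by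
        funext i
        rcases eq_or_ne i i₀ with rfl | h
        · rw [hσs]; simp
        · rw [Function.update_of_ne h, Function.update_of_ne]
          rw [← hσs]
          exact fun he => h (Sum.inl_injective (σ.injective he))
      have h2 : (fun i => Function.update w s (J (w s)) (σ (Sum.inr i)))
          = fun i => w (σ (Sum.inr i)) := by
        funext i
        rw [Function.update_of_ne]
        rw [← hσs]; exact fun he => by simpa using σ.injective he
      rw [h1, h2, ha]
      rw [Units.smul_def, Units.smul_def, map_zsmul, map_zsmul, LinearMap.mul'_apply,
        LinearMap.mul'_apply]
      rw [mul_smul_comm]; ring_nf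
    · have hσs : σ (Sum.inr i₀) = s := by rw [← hs]; simp
      have h1 : (fun i => Function.update w s (J (w s)) (σ (Sum.inl i)))
          = fun i => w (σ (Sum.inl i)) := by
        funext i
        rw [Function.update_of_ne]
        rw [← hσs]; exact fun he => by simpa using σ.injective he
      have h2 : (fun i => Function.update w s (J (w s)) (σ (Sum.inr i)))
          = Function.update (fun i => w (σ (Sum.inr i))) i₀ (J (w (σ (Sum.inr i₀)))) := by
        funext i
        rcases eq_or_ne i i₀ with rfl | h
        · rw [hσs]; simp
        · rw [Function.update_of_ne h, Function.update_of_ne]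
          rw [← hσs]
          exact fun he => h (Sum.inr_injective (σ.injective he))
      rw [h1, h2, hb]
      rw [Units.smul_def, Units.smul_def, map_zsmul, map_zsmul, LinearMap.mul'_apply,
        LinearMap.mul'_apply]
      rw [mul_smul_comm]; ring_nf

lemma isJLin_cprod (J : V →ₗ[ℝ] V) :
    ∀ (k : ℕ) (f : Fin k → (V [⋀^Fin 1]→ₗ[ℝ] ℂ)),
      (∀ j, IsJLin J (f j)) → IsJLin J (cprod k f)
  | 0, _, _ => fun _ i => i.elim0
  | (k + 1), f, hf =>
    isJLin_cwedge J _ _ (isJLin_cprod J k (f ∘ Fin.castSucc) fun j => hf _) (hf _)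

lemma isJLin_cOneForm (J : V →ₗ[ℝ] V) (hJ : ∀ v : V, J (J v) = -v)
    (hJorth : ∀ v w : V, ⟪J v, J w⟫ = ⟪v, w⟫) (e : V) :
    IsJLin J (cOneForm (cplxPair e (J e))) := by
  intro v i
  have hi : i = 0 := Subsingleton.elim _ _
  subst hi
  show cplxPair e (J e) ((Function.update v 0 (J (v 0))) 0) = _
  rw [Function.update_self]
  set x := v 0
  have h1 : ⟪J x, J e⟫ = ⟪x, e⟫ := hJorth x e
  have h2 : ⟪J x, e⟫ = -⟪x, J e⟫ := by
    have := hJorth (J x) e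
    rw [hJ x] at this
    rw [← this, inner_neg_left]
  show Complex.ofRealAm (⟪J x, e⟫) + Complex.I • Complex.ofRealAm (⟪J x, J e⟫)
      = Complex.I * (Complex.ofRealAm (⟪x, e⟫) + Complex.I • Complex.ofRealAm (⟪x, J e⟫))
  rw [h1, h2]
  simp only [smul_eq_mul, map_neg]
  push_cast
  ring_nf
  rw [Complex.I_sq]
  ring

/-- for n ≥ 2, (Ix ∧ y) ⌟ ψ₊ = −(x ∧ y) ⌟ ψ₋. -/
theorem contraction_two_vector
{V : Type*} [NormedAddCommGroup V] [InnerProductSpace ℝ V]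
    [FiniteDimensional ℝ V] (n : ℕ) (hdim : Module.finrank ℝ V = 2 * n)
    (J : V →ₗ[ℝ] V) (hJ : ∀ v : V, J (J v) = -v)
    (hJorth : ∀ v w : V, ⟪J v, J w⟫ = ⟪v, w⟫)
    (bas : OrthonormalBasis (Fin n ⊕ Fin n) ℝ V)
    (hbas : ∀ j : Fin n, bas (Sum.inr j) = J (bas (Sum.inl j)))
    (ω : V [⋀^Fin 2]→ₗ[ℝ] ℝ) (hω : ∀ x y : V, ω ![x, y] = ⟪x, J y⟫)
    (ψp ψm : V [⋀^Fin n]→ₗ[ℝ] ℝ)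
    (hψp : ψp = psiP n J (fun j => bas (Sum.inl j)))
    (hψm : ψm = psiM n J (fun j => bas (Sum.inl j)))
    (hn : 2 ≤ n) :
    ∀ x y : V, ic y (ic (J x) ψp) = -(ic y (ic x ψm)) := by
  obtain ⟨m, rfl⟩ : ∃ m, n = m + 2 := ⟨n - 2, by omega⟩
  have hΨ : IsJLin J (Psi (m + 2) J (fun j => bas (Sum.inl j))) :=
    isJLin_cprod J _ _ fun j => isJLin_cOneForm J hJ hJorth _
  intro x y
  ext v
  show ψp (Fin.cons (J x) (Fin.cons y v)) = -(ψm (Fin.cons x (Fin.cons y v)))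
  set w : Fin (m + 2) → V := Fin.cons x (Fin.cons y v) with hwdef
  have hw0 : w 0 = x := rfl
  have hcons : Fin.cons (J x) (Fin.cons y v) = Function.update w 0 (J (w 0)) := by
    rw [hw0, hwdef, Fin.update_cons_zero]
  rw [hcons, hψp, hψm]
  show (Psi (m + 2) J (fun j => bas (Sum.inl j)) (Function.update w 0 (J (w 0)))).re
      = -((Psi (m + 2) J (fun j => bas (Sum.inl j)) w).im)
  rw [hΨ w 0]
  simp [Complex.mul_re]

end SUnPaper
end
end

section
/- For n = 2 (so dim V = 4): ker Ξ₊ = V* ⊗ ℝψ₋ and ker Ξ₋ = V* ⊗ ℝψ₊, and the images coincide: Ξ₊(V* ⊗ ⟦λ^{2,0}⟧) = Ξ₋(V* ⊗ ⟦λ^{2,0}⟧) = V* ⊗ ℝω. -/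
noncomputable section

open scoped RealInnerProductSpace
open Function

namespace SUnPaper

variable {V : Type*} [NormedAddCommGroup V] [InnerProductSpace ℝ V]

/-- Ξ₊ for n = 2. -/
def XiPlus4 (bas : OrthonormalBasis (Fin 2 ⊕ Fin 2) ℝ V)
    (ψm : V [⋀^Fin 2]→ₗ[ℝ] ℝ) (ξ : V →ₗ[ℝ] (V [⋀^Fin 2]→ₗ[ℝ] ℝ)) :
    V → V [⋀^Fin 2]→ₗ[ℝ] ℝ :=
  fun X => (2 : ℝ)⁻¹ • ∑ i : Fin 2 ⊕ Fin 2, wedge (ic (bas i) (ξ X)) (ic (bas i) ψm)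

/-- Ξ₋ for n = 2. -/
def XiMinus4 (bas : OrthonormalBasis (Fin 2 ⊕ Fin 2) ℝ V)
    (ψp : V [⋀^Fin 2]→ₗ[ℝ] ℝ) (ξ : V →ₗ[ℝ] (V [⋀^Fin 2]→ₗ[ℝ] ℝ)) :
    V → V [⋀^Fin 2]→ₗ[ℝ] ℝ :=
  fun X => (-(2 : ℝ)⁻¹) • ∑ i : Fin 2 ⊕ Fin 2, wedge (ic (bas i) (ξ X)) (ic (bas i) ψp)

/-! Write `e₁ = bas (.inl 0)` and `e₂ = bas (.inl 1)`. In dimension four `⟦λ^{2,0}⟧` is the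
plane spanned by `ψ₊` and `ψ₋`: the relations `a(Ix, Iy) = -a(x, y)` leave only `a(e₁, e₂)` and
`a(e₁, Ie₂)` free, and `a = a(e₁, e₂) ψ₊ + a(e₁, Ie₂) ψ₋`. In the adapted basis one computes
`Σᵢ (fᵢ⌟ψ₊) ∧ (fᵢ⌟ψ₋) = -2ω`, `Σᵢ (fᵢ⌟ψ₋) ∧ (fᵢ⌟ψ₊) = 2ω` and `Σᵢ (fᵢ⌟ψ±) ∧ (fᵢ⌟ψ±) = 0`, so
`Ξ₊(ξ)(X) = -ξ(X)(e₁, e₂) ω` and `Ξ₋(ξ)(X) = -ξ(X)(e₁, Ie₂) ω`. Each `Ξ±` is therefore a linear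
functional of `ξ(X)` times `ω`, vanishing on `ψ∓` but not on `ψ±`. -/

section Alternating

variable {M N : Type*} [AddCommGroup M] [Module ℝ M] [AddCommGroup N] [Module ℝ N]

@[simps]
def evalₗ {ι : Type*} (v : ι → M) : (M [⋀^ι]→ₗ[ℝ] N) →ₗ[ℝ] N where
  toFun a := a v
  map_add' _ _ := rfl
  map_smul' _ _ := rfl

theorem ext_fin_two {a b : M [⋀^Fin 2]→ₗ[ℝ] N} (h : ∀ x y, a ![x, y] = b ![x, y]) : a = b := by
  ext v
  rw [← FinVec.etaExpand_eq v]
  exact h _ _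

theorem ext_fin_two_basis {ι : Type*} (f : Module.Basis ι ℝ M) {a b : M [⋀^Fin 2]→ₗ[ℝ] N}
    (h : ∀ k l, a ![f k, f l] = b ![f k, f l]) : a = b :=
  f.ext_alternating fun v _ => by
    rw [← FinVec.etaExpand_eq fun i => f (v i)]
    exact h _ _

theorem map_fin_two_swap (a : M [⋀^Fin 2]→ₗ[ℝ] N) (x y : M) : a ![y, x] = -a ![x, y] := by
  convert a.map_swap ![x, y] (show (0 : Fin 2) ≠ 1 by decide) using 2
  ext i; fin_cases i <;> rfl

theorem map_fin_two_self (a : M [⋀^Fin 2]→ₗ[ℝ] N) (x : M) : a ![x, x] = 0 :=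
  a.map_eq_zero_of_eq ![x, x] (i := 0) (j := 1) rfl (by decide)

theorem map_fin_two_neg_right (a : M [⋀^Fin 2]→ₗ[ℝ] N) (x y : M) : a ![x, -y] = -a ![x, y] := by
  convert a.map_update_neg ![x, y] 1 y using 3 <;> ext i <;> fin_cases i <;> rfl

theorem domCoprod_apply_fin_one (a b : M [⋀^Fin 1]→ₗ[ℝ] N) (w : Fin 1 ⊕ Fin 1 → M) :
    a.domCoprod b w
      = a ![w (.inl 0)] ⊗ₜ[ℝ] b ![w (.inr 0)] - a ![w (.inr 0)] ⊗ₜ[ℝ] b ![w (.inl 0)] := by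
  have h := MultilinearMap.domCoprod_alternization_eq (a := a) (b := b)
  simp only [Fintype.card_fin, Nat.factorial_one, mul_one, one_smul] at h
  rw [← h, MultilinearMap.alternatization_apply,
    show (Finset.univ : Finset (Equiv.Perm (Fin 1 ⊕ Fin 1))) =
      {1, Equiv.swap (.inl 0) (.inr 0)} by decide,
    Finset.sum_pair (by decide), Equiv.Perm.sign_swap (by decide)]
  simp [sub_eq_add_neg, Fin.fin_one_eq_zero, Matrix.cons_fin_one]

theorem domCoprod_apply_fin_zero (a : M [⋀^Fin 0]→ₗ[ℝ] N) (b : M [⋀^Fin 1]→ₗ[ℝ] N)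
    (w : Fin 0 ⊕ Fin 1 → M) :
    a.domCoprod b w = a ![] ⊗ₜ[ℝ] b ![w (.inr 0)] := by
  have h := MultilinearMap.domCoprod_alternization_eq (a := a) (b := b)
  simp only [Fintype.card_fin, Nat.factorial_one, Nat.factorial_zero, mul_one, one_smul] at h
  rw [← h, MultilinearMap.alternatization_apply,
    show (Finset.univ : Finset (Equiv.Perm (Fin 0 ⊕ Fin 1))) = {1} by decide, Finset.sum_singleton]
  simp [Fin.fin_one_eq_zero, Matrix.cons_fin_one, Matrix.empty_eq]

end Alternating

theorem wedge_apply (a b : V [⋀^Fin 1]→ₗ[ℝ] ℝ) (x y : V) :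
    wedge a b ![x, y] = a ![x] * b ![y] - a ![y] * b ![x] := by
  rw [wedge, AlternatingMap.domDomCongr_apply, LinearMap.compAlternatingMap_apply,
    domCoprod_apply_fin_one]
  simp only [comp_apply, LinearEquiv.coe_coe, map_sub, TensorProduct.lid_tmul, smul_eq_mul]
  rfl

theorem cwedge_apply (a b : V [⋀^Fin 1]→ₗ[ℝ] ℂ) (x y : V) :
    cwedge a b ![x, y] = a ![x] * b ![y] - a ![y] * b ![x] := by
  rw [cwedge, AlternatingMap.domDomCongr_apply, LinearMap.compAlternatingMap_apply,
    domCoprod_apply_fin_one]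
  simp only [comp_apply, map_sub, LinearMap.mul'_apply]
  rfl

theorem cwedge_constOfIsEmpty_apply (c : V [⋀^Fin 1]→ₗ[ℝ] ℂ) (v : Fin (0 + 1) → V) :
    cwedge (AlternatingMap.constOfIsEmpty ℝ V (Fin 0) 1) c v = c ![v 0] := by
  rw [cwedge, AlternatingMap.domDomCongr_apply, LinearMap.compAlternatingMap_apply,
    domCoprod_apply_fin_zero]
  simp only [AlternatingMap.constOfIsEmpty_apply, const_apply, comp_apply, LinearMap.mul'_apply,
    one_mul]
  rfl

theorem sum_wedge_ic_apply {ι : Type*} [Fintype ι] (f : ι → V) (a b : V [⋀^Fin 2]→ₗ[ℝ] ℝ)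
    (x y : V) :
    (∑ i, wedge (ic (f i) a) (ic (f i) b)) ![x, y]
      = ∑ i, (a ![f i, x] * b ![f i, y] - a ![f i, y] * b ![f i, x]) := by
  rw [← evalₗ_apply, map_sum]
  simp only [evalₗ_apply, wedge_apply]
  rfl

theorem cplxPair_apply (x y v : V) :
    cplxPair x y v = (⟪v, x⟫ : ℂ) + Complex.I * (⟪v, y⟫ : ℂ) := by
  simp [cplxPair, real_inner_comm]

theorem Psi_two_apply (J : V →ₗ[ℝ] V) (e : Fin 2 → V) (x y : V) :
    Psi 2 J e ![x, y] =
      cplxPair (e 0) (J (e 0)) x * cplxPair (e 1) (J (e 1)) y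
        - cplxPair (e 0) (J (e 0)) y * cplxPair (e 1) (J (e 1)) x := by
  simp [Psi, cprod, cwedge_apply, cwedge_constOfIsEmpty_apply, cOneForm]

theorem psiP_two_apply (J : V →ₗ[ℝ] V) (e : Fin 2 → V) (x y : V) :
    psiP 2 J e ![x, y] =
      ⟪x, e 0⟫ * ⟪y, e 1⟫ - ⟪x, J (e 0)⟫ * ⟪y, J (e 1)⟫
        - ⟪y, e 0⟫ * ⟪x, e 1⟫ + ⟪y, J (e 0)⟫ * ⟪x, J (e 1)⟫ := by
  simp only [psiP, LinearMap.compAlternatingMap_apply, Psi_two_apply, cplxPair_apply,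
    Complex.reLm_coe, Complex.sub_re, Complex.mul_re, Complex.add_re, Complex.add_im,
    Complex.mul_im, Complex.ofReal_re, Complex.ofReal_im, Complex.I_re, Complex.I_im]
  ring

theorem psiM_two_apply (J : V →ₗ[ℝ] V) (e : Fin 2 → V) (x y : V) :
    psiM 2 J e ![x, y] =
      ⟪x, e 0⟫ * ⟪y, J (e 1)⟫ + ⟪x, J (e 0)⟫ * ⟪y, e 1⟫
        - ⟪y, e 0⟫ * ⟪x, J (e 1)⟫ - ⟪y, J (e 0)⟫ * ⟪x, e 1⟫ := by
  simp only [psiM, LinearMap.compAlternatingMap_apply, Psi_two_apply, cplxPair_apply,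
    Complex.imLm_coe, Complex.sub_im, Complex.mul_re, Complex.add_re, Complex.add_im,
    Complex.mul_im, Complex.ofReal_re, Complex.ofReal_im, Complex.I_re, Complex.I_im]
  ring

theorem IsLam.smul {J : V →ₗ[ℝ] V} {p : ℕ} {a : V [⋀^Fin p]→ₗ[ℝ] ℝ} (ha : IsLam J a) (c : ℝ) :
    IsLam J (c • a) := fun v i j hij => by
  simp only [AlternatingMap.smul_apply, ha v i j hij, smul_neg]

section IsLamTwo

variable {J : V →ₗ[ℝ] V} {a : V [⋀^Fin 2]→ₗ[ℝ] ℝ}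

theorem isLam_two_iff : IsLam J a ↔ ∀ x y, a ![J x, J y] = -a ![x, y] := by
  constructor
  · intro ha x y
    convert ha ![x, y] 0 1 (by decide) using 2
    ext i; fin_cases i <;> rfl
  · intro h v i j hij
    obtain ⟨rfl, rfl⟩ : i = 0 ∧ j = 1 := by omega
    convert h (v 0) (v 1) using 2
    · ext i; fin_cases i <;> rfl
    · exact congrArg a (FinVec.etaExpand_eq v).symm

theorem IsLam.apply_J_left (hJ : ∀ v, J (J v) = -v) (ha : IsLam J a) (x y : V) :
    a ![J x, y] = a ![x, J y] := by
  have h := isLam_two_iff.mp ha x (J y)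
  rw [hJ, map_fin_two_neg_right] at h
  linarith

theorem IsLam.apply_self_J (hJ : ∀ v, J (J v) = -v) (ha : IsLam J a) (x : V) :
    a ![x, J x] = 0 := by
  have h := ha.apply_J_left hJ x x
  rw [map_fin_two_swap] at h
  linarith

end IsLamTwo

section RankOne

variable {M A B : Type*} [AddCommGroup M] [Module ℝ M] [AddCommGroup A] [Module ℝ A]
  [AddCommGroup B] [Module ℝ B] {P : A → Prop} {Φ : (M →ₗ[ℝ] A) → M → B} {c : A →ₗ[ℝ] ℝ}
  {ψ : A} {ω : B}

theorem ker_eq_of_apply_eq_smul (hΦ : ∀ ξ, (∀ X, P (ξ X)) → ∀ X, Φ ξ X = c (ξ X) • ω)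
    (hω : ω ≠ 0) (c' : A →ₗ[ℝ] ℝ) (hdec : ∀ a, P a → c a = 0 → a = c' a • ψ) (hψ : c ψ = 0) :
    {ξ | (∀ X, P (ξ X)) ∧ Φ ξ = 0}
      = {ξ | (∀ X, P (ξ X)) ∧ ∃ μ : M →ₗ[ℝ] ℝ, ∀ X, ξ X = μ X • ψ} := by
  ext ξ
  refine and_congr_right fun hP => ?_
  have hΦ0 : Φ ξ = 0 ↔ ∀ X, c (ξ X) = 0 := by
    simp only [funext_iff, hΦ ξ hP, Pi.zero_apply, smul_eq_zero, hω, or_false]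
  rw [hΦ0]
  constructor
  · exact fun h => ⟨c' ∘ₗ ξ, fun X => hdec _ (hP X) (h X)⟩
  · rintro ⟨μ, hμ⟩ X
    rw [hμ X, map_smul, hψ, smul_zero]

theorem image_eq_of_apply_eq_smul (hΦ : ∀ ξ, (∀ X, P (ξ X)) → ∀ X, Φ ξ X = c (ξ X) • ω)
    (hP : ∀ r : ℝ, P (r • ψ)) (hψ : c ψ ≠ 0) :
    Φ '' {ξ | ∀ X, P (ξ X)} = {F | ∃ μ : M →ₗ[ℝ] ℝ, ∀ X, F X = μ X • ω} := by
  ext F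
  constructor
  · rintro ⟨ξ, hξ, rfl⟩
    exact ⟨c ∘ₗ ξ, hΦ ξ hξ⟩
  · rintro ⟨μ, hμ⟩
    refine ⟨((c ψ)⁻¹ • μ).smulRight ψ, fun X => hP _, funext fun X => ?_⟩
    rw [hΦ _ (fun X => hP _), hμ X]
    simp [mul_comm _ (c ψ), hψ]

end RankOne

structure IsAdaptedBasis (J : V →ₗ[ℝ] V) (bas : OrthonormalBasis (Fin 2 ⊕ Fin 2) ℝ V) : Prop where
  J_J_apply : ∀ v, J (J v) = -v
  bas_inr : ∀ j, bas (.inr j) = J (bas (.inl j))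

namespace IsAdaptedBasis

variable {J : V →ₗ[ℝ] V} {bas : OrthonormalBasis (Fin 2 ⊕ Fin 2) ℝ V}

local notation "ψ₊" => psiP 2 J fun j => bas (Sum.inl j)
local notation "ψ₋" => psiM 2 J fun j => bas (Sum.inl j)

theorem J_inr (h : IsAdaptedBasis J bas) (j : Fin 2) : J (bas (.inr j)) = -bas (.inl j) := by
  rw [h.bas_inr, h.J_J_apply]

theorem inner_J_inl (h : IsAdaptedBasis J bas) (x : V) (j : Fin 2) :
    ⟪J x, bas (.inl j)⟫ = -⟪x, bas (.inr j)⟫ := by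
  conv_lhs => rw [← bas.sum_repr' x]
  fin_cases j <;> simp [Fintype.sum_sum_type, ← h.bas_inr, h.J_inr, inner_add_left,
    inner_neg_left, inner_smul_left, orthonormal_iff_ite.mp bas.orthonormal, real_inner_comm x]

theorem inner_J_inr (h : IsAdaptedBasis J bas) (x : V) (j : Fin 2) :
    ⟪J x, bas (.inr j)⟫ = ⟪x, bas (.inl j)⟫ := by
  conv_lhs => rw [← bas.sum_repr' x]
  fin_cases j <;> simp [Fintype.sum_sum_type, ← h.bas_inr, h.J_inr, inner_add_left,
    inner_neg_left, inner_smul_left, orthonormal_iff_ite.mp bas.orthonormal, real_inner_comm x]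

theorem inner_J_right (h : IsAdaptedBasis J bas) (x y : V) :
    ⟪x, J y⟫ = ⟪x, bas (.inr 0)⟫ * ⟪y, bas (.inl 0)⟫ + ⟪x, bas (.inr 1)⟫ * ⟪y, bas (.inl 1)⟫
      - ⟪x, bas (.inl 0)⟫ * ⟪y, bas (.inr 0)⟫ - ⟪x, bas (.inl 1)⟫ * ⟪y, bas (.inr 1)⟫ := by
  rw [← bas.sum_inner_mul_inner x (J y)]
  simp only [real_inner_comm (J y), Fintype.sum_sum_type, Fin.sum_univ_two, h.inner_J_inl,
    h.inner_J_inr]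
  ring

theorem kahler_ne_zero (h : IsAdaptedBasis J bas) {ω : V [⋀^Fin 2]→ₗ[ℝ] ℝ}
    (hω : ∀ x y : V, ω ![x, y] = ⟪x, J y⟫) : ω ≠ 0 := by
  intro h0
  have h1 := hω (bas (.inl 0)) (bas (.inr 0))
  rw [h0, h.J_inr, inner_neg_right] at h1
  simp at h1

theorem isLam_psiP (h : IsAdaptedBasis J bas) : IsLam J ψ₊ :=
  isLam_two_iff.mpr fun x y => by
    simp only [psiP_two_apply, ← h.bas_inr, h.inner_J_inl, h.inner_J_inr]
    ring

theorem isLam_psiM (h : IsAdaptedBasis J bas) : IsLam J ψ₋ :=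
  isLam_two_iff.mpr fun x y => by
    simp only [psiM_two_apply, ← h.bas_inr, h.inner_J_inl, h.inner_J_inr]
    ring

theorem psiP_apply (h : IsAdaptedBasis J bas) :
    ψ₊ ![bas (.inl 0), bas (.inl 1)] = 1 ∧ ψ₊ ![bas (.inl 0), bas (.inr 1)] = 0 := by
  simp [psiP_two_apply, ← h.bas_inr, orthonormal_iff_ite.mp bas.orthonormal]

theorem psiM_apply (h : IsAdaptedBasis J bas) :
    ψ₋ ![bas (.inl 0), bas (.inl 1)] = 0 ∧ ψ₋ ![bas (.inl 0), bas (.inr 1)] = 1 := by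
  simp [psiM_two_apply, ← h.bas_inr, orthonormal_iff_ite.mp bas.orthonormal]

theorem eq_smul_psiP_add_smul_psiM (h : IsAdaptedBasis J bas) {a : V [⋀^Fin 2]→ₗ[ℝ] ℝ}
    (ha : IsLam J a) :
    a = a ![bas (.inl 0), bas (.inl 1)] • ψ₊ + a ![bas (.inl 0), bas (.inr 1)] • ψ₋ := by
  have h00 := ha.apply_self_J h.J_J_apply (bas (.inl 0))
  have h11 := ha.apply_self_J h.J_J_apply (bas (.inl 1))
  have h01 := ha.apply_J_left h.J_J_apply (bas (.inl 0)) (bas (.inl 1))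
  have h10 := ha.apply_J_left h.J_J_apply (bas (.inl 1)) (bas (.inl 0))
  have hJJ := isLam_two_iff.mp ha (bas (.inl 0)) (bas (.inl 1))
  simp only [← h.bas_inr] at h00 h11 h01 h10 hJJ
  refine ext_fin_two_basis bas.toBasis fun k l => ?_
  rcases k with k | k <;> rcases l with l | l <;> fin_cases k <;> fin_cases l <;>
    simp only [Fin.zero_eta, Fin.mk_one, Fin.isValue, OrthonormalBasis.coe_toBasis,
      AlternatingMap.add_apply, AlternatingMap.smul_apply, smul_eq_mul, psiP_two_apply,
      psiM_two_apply, ← h.bas_inr, orthonormal_iff_ite.mp bas.orthonormal, Sum.inl.injEq,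
      Sum.inr.injEq, reduceCtorEq, zero_ne_one, one_ne_zero, ↓reduceIte, map_fin_two_self] <;>
    linarith [map_fin_two_swap a (bas (.inl 0)) (bas (.inl 1)),
      map_fin_two_swap a (bas (.inl 0)) (bas (.inr 0)),
      map_fin_two_swap a (bas (.inl 0)) (bas (.inr 1)),
      map_fin_two_swap a (bas (.inl 1)) (bas (.inr 0)),
      map_fin_two_swap a (bas (.inl 1)) (bas (.inr 1)),
      map_fin_two_swap a (bas (.inr 0)) (bas (.inr 1))]

theorem eq_smul_psiM (h : IsAdaptedBasis J bas) {a : V [⋀^Fin 2]→ₗ[ℝ] ℝ} (ha : IsLam J a)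
    (h0 : a ![bas (.inl 0), bas (.inl 1)] = 0) : a = a ![bas (.inl 0), bas (.inr 1)] • ψ₋ := by
  conv_lhs => rw [h.eq_smul_psiP_add_smul_psiM ha, h0, zero_smul, zero_add]

theorem eq_smul_psiP (h : IsAdaptedBasis J bas) {a : V [⋀^Fin 2]→ₗ[ℝ] ℝ} (ha : IsLam J a)
    (h0 : a ![bas (.inl 0), bas (.inr 1)] = 0) : a = a ![bas (.inl 0), bas (.inl 1)] • ψ₊ := by
  conv_lhs => rw [h.eq_smul_psiP_add_smul_psiM ha, h0, zero_smul, add_zero]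

theorem sum_wedge_ic_psiM (h : IsAdaptedBasis J bas) {ω : V [⋀^Fin 2]→ₗ[ℝ] ℝ}
    (hω : ∀ x y : V, ω ![x, y] = ⟪x, J y⟫) {a : V [⋀^Fin 2]→ₗ[ℝ] ℝ} (ha : IsLam J a) :
    ∑ i, wedge (ic (bas i) a) (ic (bas i) ψ₋) = (-2 * a ![bas (.inl 0), bas (.inl 1)]) • ω := by
  refine ext_fin_two fun x y => ?_
  rw [sum_wedge_ic_apply]
  conv_lhs => rw [h.eq_smul_psiP_add_smul_psiM ha]
  simp only [AlternatingMap.add_apply, AlternatingMap.smul_apply, smul_eq_mul, psiP_two_apply,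
    psiM_two_apply, ← h.bas_inr, hω, h.inner_J_right, Fintype.sum_sum_type, Fin.sum_univ_two,
    orthonormal_iff_ite.mp bas.orthonormal, Sum.inl.injEq, Sum.inr.injEq, reduceCtorEq,
    zero_ne_one, one_ne_zero, ↓reduceIte]
  ring

theorem sum_wedge_ic_psiP (h : IsAdaptedBasis J bas) {ω : V [⋀^Fin 2]→ₗ[ℝ] ℝ}
    (hω : ∀ x y : V, ω ![x, y] = ⟪x, J y⟫) {a : V [⋀^Fin 2]→ₗ[ℝ] ℝ} (ha : IsLam J a) :
    ∑ i, wedge (ic (bas i) a) (ic (bas i) ψ₊) = (2 * a ![bas (.inl 0), bas (.inr 1)]) • ω := by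
  refine ext_fin_two fun x y => ?_
  rw [sum_wedge_ic_apply]
  conv_lhs => rw [h.eq_smul_psiP_add_smul_psiM ha]
  simp only [AlternatingMap.add_apply, AlternatingMap.smul_apply, smul_eq_mul, psiP_two_apply,
    psiM_two_apply, ← h.bas_inr, hω, h.inner_J_right, Fintype.sum_sum_type, Fin.sum_univ_two,
    orthonormal_iff_ite.mp bas.orthonormal, Sum.inl.injEq, Sum.inr.injEq, reduceCtorEq,
    zero_ne_one, one_ne_zero, ↓reduceIte]
  ring

theorem XiPlus4_eq_smul (h : IsAdaptedBasis J bas) {ω : V [⋀^Fin 2]→ₗ[ℝ] ℝ}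
    (hω : ∀ x y : V, ω ![x, y] = ⟪x, J y⟫) (ξ : V →ₗ[ℝ] V [⋀^Fin 2]→ₗ[ℝ] ℝ)
    (hξ : ∀ X, IsLam J (ξ X)) (X : V) :
    XiPlus4 bas ψ₋ ξ X = (-evalₗ ![bas (.inl 0), bas (.inl 1)]) (ξ X) • ω := by
  rw [XiPlus4, h.sum_wedge_ic_psiM hω (hξ X), smul_smul, LinearMap.neg_apply, evalₗ_apply]
  congr 1
  ring

theorem XiMinus4_eq_smul (h : IsAdaptedBasis J bas) {ω : V [⋀^Fin 2]→ₗ[ℝ] ℝ}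
    (hω : ∀ x y : V, ω ![x, y] = ⟪x, J y⟫) (ξ : V →ₗ[ℝ] V [⋀^Fin 2]→ₗ[ℝ] ℝ)
    (hξ : ∀ X, IsLam J (ξ X)) (X : V) :
    XiMinus4 bas ψ₊ ξ X = (-evalₗ ![bas (.inl 0), bas (.inr 1)]) (ξ X) • ω := by
  rw [XiMinus4, h.sum_wedge_ic_psiP hω (hξ X), smul_smul, LinearMap.neg_apply, evalₗ_apply]
  congr 1
  ring

end IsAdaptedBasis

theorem Xi_kernel_image_dim_four_general
{V : Type*} [NormedAddCommGroup V] [InnerProductSpace ℝ V]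
    (J : V →ₗ[ℝ] V) (hJ : ∀ v : V, J (J v) = -v)
    (bas : OrthonormalBasis (Fin 2 ⊕ Fin 2) ℝ V)
    (hbas : ∀ j : Fin 2, bas (Sum.inr j) = J (bas (Sum.inl j)))
    (ω : V [⋀^Fin 2]→ₗ[ℝ] ℝ) (hω : ∀ x y : V, ω ![x, y] = ⟪x, J y⟫)
    (ψp ψm : V [⋀^Fin 2]→ₗ[ℝ] ℝ)
    (hψp : ψp = psiP 2 J (fun j => bas (Sum.inl j)))
    (hψm : ψm = psiM 2 J (fun j => bas (Sum.inl j))) :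
    ({ξ : V →ₗ[ℝ] (V [⋀^Fin 2]→ₗ[ℝ] ℝ) | (∀ X, IsLam J (ξ X)) ∧ XiPlus4 bas ψm ξ = 0}
        = {ξ | (∀ X, IsLam J (ξ X)) ∧ ∃ μ : V →ₗ[ℝ] ℝ, ∀ X, ξ X = μ X • ψm})
      ∧ ({ξ : V →ₗ[ℝ] (V [⋀^Fin 2]→ₗ[ℝ] ℝ) | (∀ X, IsLam J (ξ X)) ∧ XiMinus4 bas ψp ξ = 0}
        = {ξ | (∀ X, IsLam J (ξ X)) ∧ ∃ μ : V →ₗ[ℝ] ℝ, ∀ X, ξ X = μ X • ψp})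
      ∧ (XiPlus4 bas ψm '' {ξ | ∀ X, IsLam J (ξ X)}
        = XiMinus4 bas ψp '' {ξ | ∀ X, IsLam J (ξ X)})
      ∧ (XiPlus4 bas ψm '' {ξ | ∀ X, IsLam J (ξ X)}
        = {F : V → V [⋀^Fin 2]→ₗ[ℝ] ℝ | ∃ μ : V →ₗ[ℝ] ℝ, ∀ X, F X = μ X • ω}) := by
  subst hψp hψm
  have h : IsAdaptedBasis J bas := ⟨hJ, hbas⟩
  have hPlus := h.XiPlus4_eq_smul hω
  have hMinus := h.XiMinus4_eq_smul hω
  have hω0 := h.kahler_ne_zero hω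
  obtain ⟨hp₀, hp₁⟩ := h.psiP_apply
  obtain ⟨hm₀, hm₁⟩ := h.psiM_apply
  have imPlus := image_eq_of_apply_eq_smul (P := IsLam J) (ω := ω) hPlus h.isLam_psiP.smul
    (by simp [hp₀])
  have imMinus := image_eq_of_apply_eq_smul (P := IsLam J) (ω := ω) hMinus h.isLam_psiM.smul
    (by simp [hm₁])
  refine ⟨?_, ?_, imPlus.trans imMinus.symm, imPlus⟩
  · exact ker_eq_of_apply_eq_smul (P := IsLam J) (ω := ω) hPlus hω0 (evalₗ _)
      (fun a ha h0 => h.eq_smul_psiM ha (neg_eq_zero.mp h0)) (by simp [hm₀])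
  · exact ker_eq_of_apply_eq_smul (P := IsLam J) (ω := ω) hMinus hω0 (evalₗ _)
      (fun a ha h0 => h.eq_smul_psiP ha (neg_eq_zero.mp h0)) (by simp [hp₁])

/-- for n = 2, ker Ξ₊ = V* ⊗ ℝψ₋, ker Ξ₋ = V* ⊗ ℝψ₊ and
Ξ₊(V*⊗⟦λ^{2,0}⟧) = Ξ₋(V*⊗⟦λ^{2,0}⟧) = V* ⊗ ℝω. -/
theorem Xi_kernel_image_dim_four
{V : Type*} [NormedAddCommGroup V] [InnerProductSpace ℝ V]
    [FiniteDimensional ℝ V] (hdim : Module.finrank ℝ V = 4)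
    (J : V →ₗ[ℝ] V) (hJ : ∀ v : V, J (J v) = -v)
    (hJorth : ∀ v w : V, ⟪J v, J w⟫ = ⟪v, w⟫)
    (bas : OrthonormalBasis (Fin 2 ⊕ Fin 2) ℝ V)
    (hbas : ∀ j : Fin 2, bas (Sum.inr j) = J (bas (Sum.inl j)))
    (ω : V [⋀^Fin 2]→ₗ[ℝ] ℝ) (hω : ∀ x y : V, ω ![x, y] = ⟪x, J y⟫)
    (ψp ψm : V [⋀^Fin 2]→ₗ[ℝ] ℝ)
    (hψp : ψp = psiP 2 J (fun j => bas (Sum.inl j)))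
    (hψm : ψm = psiM 2 J (fun j => bas (Sum.inl j))) :
    ({ξ : V →ₗ[ℝ] (V [⋀^Fin 2]→ₗ[ℝ] ℝ) | (∀ X, IsLam J (ξ X)) ∧ XiPlus4 bas ψm ξ = 0}
        = {ξ | (∀ X, IsLam J (ξ X)) ∧ ∃ μ : V →ₗ[ℝ] ℝ, ∀ X, ξ X = μ X • ψm})
      ∧ ({ξ : V →ₗ[ℝ] (V [⋀^Fin 2]→ₗ[ℝ] ℝ) | (∀ X, IsLam J (ξ X)) ∧ XiMinus4 bas ψp ξ = 0}
        = {ξ | (∀ X, IsLam J (ξ X)) ∧ ∃ μ : V →ₗ[ℝ] ℝ, ∀ X, ξ X = μ X • ψp})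
      ∧ (XiPlus4 bas ψm '' {ξ | ∀ X, IsLam J (ξ X)}
        = XiMinus4 bas ψp '' {ξ | ∀ X, IsLam J (ξ X)})
      ∧ (XiPlus4 bas ψm '' {ξ | ∀ X, IsLam J (ξ X)}
        = {F : V → V [⋀^Fin 2]→ₗ[ℝ] ℝ | ∃ μ : V →ₗ[ℝ] ℝ, ∀ X, F X = μ X • ω}) :=
  Xi_kernel_image_dim_four_general J hJ bas hbas ω hω ψp ψm hψp hψm

end SUnPaper
end
end

section
/- For n ≥ 3, any one-form x and any b ∈ ⟦λ^{n−2,0}⟧: 𝓛(x ⊗ (b ∧ ω)) = (n−2)·Ix ⊗ (I₍₁₎b ∧ ω), where Ix(X) = −x(IX). Consequently 𝓛∘𝓛 = (n−2)²·id on the subspace V* ⊗ (⟦λ^{n−2,0}⟧ ∧ ω) of V* ⊗ ΛⁿV*. -/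
/-!
Write `D c = ∑ᵢ c(…, I Xᵢ, …)` for the derivation of `Λ*V*` induced by `I`. Unwinding the
definition, `𝓛(x ⊗ c) = (x ∘ I) ⊗ D c`. Since `D` is a derivation of the wedge product and
kills `ω` (because `I` is orthogonal with `I² = -1`), `D(b ∧ ω) = D b ∧ ω`. For `b ∈ ⟦λ^{p,0}⟧`
all `p` terms of `D b` coincide, so `D b = -p I₍₁₎b`; likewise each of the `p²` terms of `D² b`
equals `-b`, so `D² b = -p² b`. With `p = n - 2` and `x ∘ I ∘ I = -x` this gives both claims,
the second one first on generators and then on their span by linearity of `𝓛`.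
-/

noncomputable section

open scoped RealInnerProductSpace
open Function

namespace SUnPaper

variable {V : Type*} [NormedAddCommGroup V] [InnerProductSpace ℝ V]

/-- The pure tensor x ⊗ c ∈ V* ⊗ ΛⁿV*, viewed as an (0, n+1)-tensor. -/
def tens (n : ℕ) (μ : V [⋀^Fin 1]→ₗ[ℝ] ℝ) (c : V [⋀^Fin n]→ₗ[ℝ] ℝ) :
    (Fin (n + 1) → V) → ℝ :=
  fun v => μ ![v 0] * c (fun j : Fin n => v j.succ)

/-- The operator 𝓛 = I₍₁₎(I₍₂₎ + ⋯ + I₍ₙ₊₁₎) on (0, n+1)-tensors. -/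
def Lop (n : ℕ) (J : V →ₗ[ℝ] V) (F : (Fin (n + 1) → V) → ℝ) :
    (Fin (n + 1) → V) → ℝ :=
  fun v => ∑ j : Fin n,
    F (Function.update (Function.update v 0 (J (v 0))) j.succ (J (v j.succ)))

end SUnPaper

namespace MultilinearMap

variable {R M N N' ι : Type*} [CommSemiring R] [AddCommMonoid M] [Module R M]
  [AddCommMonoid N] [Module R N] [AddCommMonoid N'] [Module R N'] [Fintype ι] [DecidableEq ι]

def endDeriv (f : M →ₗ[R] M) :
    MultilinearMap R (fun _ : ι => M) N →ₗ[R] MultilinearMap R (fun _ : ι => M) N :=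
  ∑ i, compLinearMapₗ (update (fun _ => LinearMap.id) i f)

theorem endDeriv_apply (f : M →ₗ[R] M) (m : MultilinearMap R (fun _ : ι => M) N) (v : ι → M) :
    endDeriv f m v = ∑ i, m (update v i (f (v i))) := by
  simp only [endDeriv, LinearMap.coe_sum, Finset.sum_apply, sum_apply, compLinearMapₗ_apply,
    compLinearMap_apply]
  refine Finset.sum_congr rfl fun i _ => congrArg m (funext fun k => ?_)
  rcases eq_or_ne k i with rfl | hk <;> simp [*]

theorem endDeriv_domDomCongr {κ : Type*} [Fintype κ] [DecidableEq κ] (f : M →ₗ[R] M) (σ : ι ≃ κ)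
    (m : MultilinearMap R (fun _ : ι => M) N) :
    endDeriv f (m.domDomCongr σ) = (endDeriv f m).domDomCongr σ := by
  ext v
  simp only [endDeriv_apply, domDomCongr_apply, ← σ.sum_comp,
    update_comp_eq_of_injective' v σ.injective]

theorem endDeriv_compMultilinearMap (f : M →ₗ[R] M) (g : N →ₗ[R] N')
    (m : MultilinearMap R (fun _ : ι => M) N) :
    endDeriv f (g.compMultilinearMap m) = g.compMultilinearMap (endDeriv f m) := by
  ext v
  simp only [endDeriv_apply, LinearMap.compMultilinearMap_apply]
  exact (_root_.map_sum g _ _).symm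

theorem endDeriv_domCoprod {ι' N₁ N₂ : Type*} [Fintype ι'] [DecidableEq ι'] [AddCommMonoid N₁]
    [Module R N₁] [AddCommMonoid N₂] [Module R N₂] (f : M →ₗ[R] M)
    (a : MultilinearMap R (fun _ : ι => M) N₁) (b : MultilinearMap R (fun _ : ι' => M) N₂) :
    endDeriv f (a.domCoprod b) = (endDeriv f a).domCoprod b + a.domCoprod (endDeriv f b) := by
  ext v
  simp only [endDeriv_apply, domCoprod_apply, add_apply, Fintype.sum_sum_type,
    TensorProduct.sum_tmul, TensorProduct.tmul_sum,
    update_comp_eq_of_injective' v Sum.inl_injective,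
    update_comp_eq_of_injective' v Sum.inr_injective,
    update_comp_eq_of_forall_ne' v _ fun _ => Sum.inl_ne_inr,
    update_comp_eq_of_forall_ne' v _ fun _ => Sum.inr_ne_inl]

end MultilinearMap

namespace AlternatingMap

variable {R M N N' ι : Type*} [CommSemiring R] [AddCommMonoid M] [Module R M]
  [AddCommGroup N] [Module R N] [AddCommGroup N'] [Module R N'] [Fintype ι] [DecidableEq ι]

/-- With the paper's convention `I₍ᵢ₎a = -a(…, I Xᵢ, …)`, `a.endDeriv I = -∑ᵢ I₍ᵢ₎a`. -/
def endDeriv (f : M →ₗ[R] M) (a : M [⋀^ι]→ₗ[R] N) : M [⋀^ι]→ₗ[R] N where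
  toMultilinearMap := MultilinearMap.endDeriv f a.toMultilinearMap
  map_eq_zero_of_eq' v i j hv hij := by
    -- only the terms at `i` and `j` can be nonzero, and they differ by the transposition `(i j)`
    have hswap : update v j (f (v j)) = update v i (f (v i)) ∘ Equiv.swap i j := by
      have hv_swap : v ∘ Equiv.swap i j = v := by
        rw [Equiv.comp_swap_eq_update, hv, update_eq_self, update_eq_self_iff.mpr hv.symm]
      rw [update_comp_equiv, hv_swap, Equiv.symm_swap, Equiv.swap_apply_left, hv]
    change MultilinearMap.endDeriv f (a : MultilinearMap R (fun _ : ι => M) N) v = 0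
    rw [MultilinearMap.endDeriv_apply, Fintype.sum_eq_add i j hij, coe_multilinearMap, hswap,
      a.map_swap _ hij, add_neg_cancel]
    rintro k ⟨hki, hkj⟩
    exact a.map_eq_zero_of_eq _ (by simp [update_of_ne, hki.symm, hkj.symm, hv]) hij

@[simp]
theorem coe_endDeriv (f : M →ₗ[R] M) (a : M [⋀^ι]→ₗ[R] N) :
    (a.endDeriv f : MultilinearMap R (fun _ : ι => M) N) = MultilinearMap.endDeriv f a :=
  rfl

theorem endDeriv_apply (f : M →ₗ[R] M) (a : M [⋀^ι]→ₗ[R] N) (v : ι → M) :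
    a.endDeriv f v = ∑ i, a (update v i (f (v i))) :=
  MultilinearMap.endDeriv_apply f (a : MultilinearMap R (fun _ : ι => M) N) v

theorem endDeriv_domDomCongr {κ : Type*} [Fintype κ] [DecidableEq κ] (f : M →ₗ[R] M) (σ : ι ≃ κ)
    (a : M [⋀^ι]→ₗ[R] N) : (a.domDomCongr σ).endDeriv f = (a.endDeriv f).domDomCongr σ :=
  coe_multilinearMap_injective <|
    MultilinearMap.endDeriv_domDomCongr f σ (a : MultilinearMap R (fun _ : ι => M) N)

theorem endDeriv_compAlternatingMap (f : M →ₗ[R] M) (g : N →ₗ[R] N') (a : M [⋀^ι]→ₗ[R] N) :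
    (g.compAlternatingMap a).endDeriv f = g.compAlternatingMap (a.endDeriv f) :=
  coe_multilinearMap_injective <|
    MultilinearMap.endDeriv_compMultilinearMap f g (a : MultilinearMap R (fun _ : ι => M) N)

theorem endDeriv_domCoprod {ι' N₁ N₂ : Type*} [Fintype ι'] [DecidableEq ι'] [AddCommGroup N₁]
    [Module R N₁] [AddCommGroup N₂] [Module R N₂] (f : M →ₗ[R] M)
    (a : M [⋀^ι]→ₗ[R] N₁) (b : M [⋀^ι']→ₗ[R] N₂) :
    (a.domCoprod b).endDeriv f = (a.endDeriv f).domCoprod b + a.domCoprod (b.endDeriv f) := by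
  apply coe_multilinearMap_injective
  simp only [coe_endDeriv, domCoprod_coe, coe_add, map_sum, ← Finset.sum_add_distrib]
  refine Finset.sum_congr rfl fun σ _ => ?_
  induction σ using Quotient.inductionOn' with
  | h σ =>
    rw [domCoprod.summand_mk'', domCoprod.summand_mk'', domCoprod.summand_mk'', Units.smul_def,
      map_zsmul, MultilinearMap.endDeriv_domDomCongr, MultilinearMap.endDeriv_domCoprod,
      Units.smul_def, Units.smul_def, ← smul_add]
    exact congrArg _ (map_add (MultilinearMap.domDomCongrEquiv σ) _ _)

theorem endDeriv_eq_zero_of_fin_two (f : M →ₗ[R] M) (ω : M [⋀^Fin 2]→ₗ[R] N)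
    (h : ∀ x y, ω ![f x, y] + ω ![x, f y] = 0) : ω.endDeriv f = 0 := by
  ext u
  rw [endDeriv_apply, Fin.sum_univ_two, zero_apply]
  convert h (u 0) (u 1) using 3 <;> ext k <;> fin_cases k <;> simp

theorem compLinearMap_compLinearMap_of_fin_one {M : Type*} [AddCommGroup M] [Module R M]
    {f : M →ₗ[R] M} (hf : ∀ x, f (f x) = -x) (μ : M [⋀^Fin 1]→ₗ[R] N) :
    (μ.compLinearMap f).compLinearMap f = -μ := by
  ext v
  have hv : (fun i => f (f (v i))) = update v 0 (-v 0) := by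
    ext i
    rw [Subsingleton.elim i 0, hf, update_self]
  rw [compLinearMap_apply, compLinearMap_apply, hv, map_update_neg, update_eq_self, neg_apply]

end AlternatingMap

namespace SUnPaper

variable {V : Type*} [NormedAddCommGroup V] [InnerProductSpace ℝ V]

theorem wedge_smul_left {p q : ℕ} (r : ℝ) (a : V [⋀^Fin p]→ₗ[ℝ] ℝ) (b : V [⋀^Fin q]→ₗ[ℝ] ℝ) :
    wedge (r • a) b = r • wedge a b := by
  rw [wedge, ← AlternatingMap.domCoprod'_apply, ← TensorProduct.smul_tmul', map_smul,
    AlternatingMap.domCoprod'_apply, LinearMap.compAlternatingMap_smul,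
    AlternatingMap.domDomCongr_smul, wedge]

theorem wedge_zero_right {p q : ℕ} (a : V [⋀^Fin p]→ₗ[ℝ] ℝ) :
    wedge a (0 : V [⋀^Fin q]→ₗ[ℝ] ℝ) = 0 := by
  rw [wedge, ← AlternatingMap.domCoprod'_apply, TensorProduct.tmul_zero, map_zero,
    LinearMap.compAlternatingMap_zero, AlternatingMap.domDomCongr_zero]

theorem endDeriv_wedge {p q : ℕ} (f : V →ₗ[ℝ] V) (a : V [⋀^Fin p]→ₗ[ℝ] ℝ)
    (b : V [⋀^Fin q]→ₗ[ℝ] ℝ) :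
    (wedge a b).endDeriv f = wedge (a.endDeriv f) b + wedge a (b.endDeriv f) := by
  simp only [wedge, AlternatingMap.endDeriv_domDomCongr, AlternatingMap.endDeriv_compAlternatingMap,
    AlternatingMap.endDeriv_domCoprod, LinearMap.compAlternatingMap_add,
    AlternatingMap.domDomCongr_add]

theorem endDeriv_kahlerForm {J : V →ₗ[ℝ] V} (hJ : ∀ v : V, J (J v) = -v)
    (hJorth : ∀ v w : V, ⟪J v, J w⟫ = ⟪v, w⟫) {ω : V [⋀^Fin 2]→ₗ[ℝ] ℝ}
    (hω : ∀ x y : V, ω ![x, y] = ⟪x, J y⟫) : ω.endDeriv J = 0 :=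
  ω.endDeriv_eq_zero_of_fin_two J fun x y => by
    rw [hω, hω, hJorth, hJ, inner_neg_right, add_neg_cancel]

section IsLam

variable {J : V →ₗ[ℝ] V} {p : ℕ} {b : V [⋀^Fin p]→ₗ[ℝ] ℝ}

theorem IsLam.apply_update_update (hb : IsLam J b) (v : Fin p → V) {i j : Fin p} (hij : i ≠ j) :
    b (update (update v i (J (v i))) j (J (v j))) = -b v := by
  rcases hij.lt_or_gt with h | h
  · exact hb v i j h
  · rw [update_comm hij]
    exact hb v j i h

theorem IsLam.apply_update_eq (hJ : ∀ v : V, J (J v) = -v) (hb : IsLam J b) (v : Fin p → V)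
    (i j : Fin p) : b (update v i (J (v i))) = b (update v j (J (v j))) := by
  rcases eq_or_ne i j with rfl | hij
  · rfl
  have h := hb.apply_update_update (update v j (J (v j))) hij
  rwa [update_of_ne hij, update_self, hJ, update_comm hij, update_idem, update_comm hij.symm,
    AlternatingMap.map_update_neg, update_comm hij, update_eq_self, neg_inj] at h

theorem IsLam.endDeriv_apply (hJ : ∀ v : V, J (J v) = -v) (hb : IsLam J b) (v : Fin p → V)
    (i : Fin p) : b.endDeriv J v = p * b (update v i (J (v i))) := by
  rw [AlternatingMap.endDeriv_apply, Finset.sum_congr rfl fun j _ => hb.apply_update_eq hJ v j i,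
    Finset.sum_const, Finset.card_univ, Fintype.card_fin, nsmul_eq_mul]

theorem IsLam.endDeriv_endDeriv (hJ : ∀ v : V, J (J v) = -v) (hb : IsLam J b) :
    (b.endDeriv J).endDeriv J = -((p : ℝ) ^ 2) • b := by
  ext v
  have hterm : ∀ i j, b (update (update v i (J (v i))) j (J (update v i (J (v i)) j))) = -b v := by
    intro i j
    rcases eq_or_ne i j with rfl | hij
    · rw [update_idem, update_self, hJ, AlternatingMap.map_update_neg, update_eq_self]
    · rw [update_of_ne hij.symm, hb.apply_update_update v hij]
  simp only [AlternatingMap.endDeriv_apply, hterm, Finset.sum_const, Finset.card_univ,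
    Fintype.card_fin, nsmul_eq_mul, AlternatingMap.smul_apply, smul_eq_mul]
  ring

end IsLam

def lopLinearMap (n : ℕ) (J : V →ₗ[ℝ] V) :
    ((Fin (n + 1) → V) → ℝ) →ₗ[ℝ] (Fin (n + 1) → V) → ℝ where
  toFun := Lop n J
  map_add' F G := by ext v; simp [Lop, Finset.sum_add_distrib]
  map_smul' r F := by ext v; simp [Lop, Finset.mul_sum]

@[simp]
theorem lopLinearMap_apply (n : ℕ) (J : V →ₗ[ℝ] V) (F : (Fin (n + 1) → V) → ℝ) :
    lopLinearMap n J F = Lop n J F :=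
  rfl

theorem Lop_tens (n : ℕ) (J : V →ₗ[ℝ] V) (μ : V [⋀^Fin 1]→ₗ[ℝ] ℝ) (c : V [⋀^Fin n]→ₗ[ℝ] ℝ) :
    Lop n J (tens n μ c) = tens n (μ.compLinearMap J) (c.endDeriv J) := by
  ext v
  simp only [Lop, tens, AlternatingMap.endDeriv_apply, Finset.mul_sum]
  refine Finset.sum_congr rfl fun j _ => ?_
  have h0 : ![J (v 0)] = fun i => J (![v 0] i) := by ext i; fin_cases i; rfl
  rw [update_of_ne (Fin.succ_ne_zero j).symm, update_self, h0, ← AlternatingMap.compLinearMap_apply,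
    update_comp_eq_of_injective' _ (Fin.succ_injective n),
    update_comp_eq_of_forall_ne' _ _ fun k => Fin.succ_ne_zero k]

/-- for n ≥ 3, 𝓛(x ⊗ (b ∧ ω)) = (n−2)·Ix ⊗ (I₍₁₎b ∧ ω) for
b ∈ ⟦λ^{n−2,0}⟧, and consequently 𝓛∘𝓛 = (n−2)²·id on V* ⊗ (⟦λ^{n−2,0}⟧ ∧ ω). -/
theorem Lop_on_tensors
{V : Type*} [NormedAddCommGroup V] [InnerProductSpace ℝ V]
    (n : ℕ)
    (J : V →ₗ[ℝ] V) (hJ : ∀ v : V, J (J v) = -v)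
    (hJorth : ∀ v w : V, ⟪J v, J w⟫ = ⟪v, w⟫)
    (ω : V [⋀^Fin 2]→ₗ[ℝ] ℝ) (hω : ∀ x y : V, ω ![x, y] = ⟪x, J y⟫)
    (hn : 3 ≤ n) :
    (∀ (μ : V [⋀^Fin 1]→ₗ[ℝ] ℝ) (b c : V [⋀^Fin (n - 2)]→ₗ[ℝ] ℝ),
      IsLam J b →
      (∀ v : Fin (n - 2) → V,
        c v = - b (Function.update v ⟨0, by omega⟩ (J (v ⟨0, by omega⟩)))) →
      Lop n J (tens n μ ((wedge b ω).domDomCongr (finCongr (by omega : n - 2 + 2 = n))))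
        = fun v => ((n : ℝ) - 2) *
            tens n (-(μ.compLinearMap J))
              ((wedge c ω).domDomCongr (finCongr (by omega : n - 2 + 2 = n))) v)
      ∧ (∀ F : (Fin (n + 1) → V) → ℝ,
        F ∈ Submodule.span ℝ
          {G | ∃ (μ : V [⋀^Fin 1]→ₗ[ℝ] ℝ) (b : V [⋀^Fin (n - 2)]→ₗ[ℝ] ℝ),
            IsLam J b ∧
            G = tens n μ ((wedge b ω).domDomCongr (finCongr (by omega : n - 2 + 2 = n)))} →
        Lop n J (Lop n J F) = ((n : ℝ) - 2) ^ 2 • F) := by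
  have hp : ((n - 2 : ℕ) : ℝ) = n - 2 := by rw [Nat.cast_sub (by omega : 2 ≤ n), Nat.cast_ofNat]
  have hLop (μ : V [⋀^Fin 1]→ₗ[ℝ] ℝ) (b : V [⋀^Fin (n - 2)]→ₗ[ℝ] ℝ) :
      Lop n J (tens n μ ((wedge b ω).domDomCongr (finCongr (by omega : n - 2 + 2 = n)))) =
        tens n (μ.compLinearMap J)
          ((wedge (b.endDeriv J) ω).domDomCongr (finCongr (by omega : n - 2 + 2 = n))) := by
    rw [Lop_tens, AlternatingMap.endDeriv_domDomCongr, endDeriv_wedge,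
      endDeriv_kahlerForm hJ hJorth hω, wedge_zero_right, add_zero]
  refine ⟨fun μ b c hb hc => ?_, fun F hF => ?_⟩
  · have hbc : b.endDeriv J = -((n : ℝ) - 2) • c := by
      ext v
      rw [hb.endDeriv_apply hJ v ⟨0, by omega⟩, AlternatingMap.smul_apply, hc, hp, smul_eq_mul]
      ring
    rw [hLop, hbc, wedge_smul_left, AlternatingMap.domDomCongr_smul]
    ext v
    simp only [tens, AlternatingMap.smul_apply, AlternatingMap.neg_apply, smul_eq_mul]
    ring
  · refine LinearMap.eqOn_span' (f := lopLinearMap n J ∘ₗ lopLinearMap n J)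
      (g := ((n : ℝ) - 2) ^ 2 • LinearMap.id) ?_ hF
    rintro _ ⟨μ, b, hb, rfl⟩
    simp only [LinearMap.comp_apply, lopLinearMap_apply, LinearMap.smul_apply, LinearMap.id_apply]
    rw [hLop, hLop, AlternatingMap.compLinearMap_compLinearMap_of_fin_one hJ,
      hb.endDeriv_endDeriv hJ, wedge_smul_left, AlternatingMap.domDomCongr_smul, hp]
    ext v
    simp only [tens, Pi.smul_apply, AlternatingMap.smul_apply, AlternatingMap.neg_apply,
      smul_eq_mul]
    ring

end SUnPaper
end
end

section
/- For n ≥ 2, the two sets of tensors in V* ⊗ Λ^{n}V* coincide: {X ↦ ((x ∧ X) ⌟ ψ₊) ∧ ω : x ∈ V} = {X ↦ ((x ∧ X) ⌟ ψ₋) ∧ ω : x ∈ V}. -/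
noncomputable section

open scoped RealInnerProductSpace
open Function

namespace SUnPaper

variable {V : Type*} [NormedAddCommGroup V] [InnerProductSpace ℝ V]

/-!
The complex volume form `Ψ = e₁ℂ ∧ ⋯ ∧ eₙℂ` is complex linear in each argument for the
complex structure `I`: every factor `eⱼℂ` satisfies `eⱼℂ (I w) = i · eⱼℂ w`, and the shuffle
summands of a wedge product inherit this slot by slot. Hence `ψ₊(x, …) = Re Ψ(x, …)
= Im (i Ψ(x, …)) = Im Ψ(I x, …) = ψ₋(I x, …)`, i.e. `x ⌟ ψ₊ = (I x) ⌟ ψ₋`, so the two families of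
tensors are reparametrisations of each other by the bijection `I`.
-/

open Complex

def IsComplexMultilinear (J : V →ₗ[ℝ] V) {ι : Type*} [DecidableEq ι]
    (f : MultilinearMap ℝ (fun _ : ι => V) ℂ) : Prop :=
  ∀ (v : ι → V) (i : ι), f (update v i (J (v i))) = I * f v

namespace IsComplexMultilinear

variable {J : V →ₗ[ℝ] V} {ι ι' : Type*} [DecidableEq ι] [DecidableEq ι']

lemma domDomCongr {f : MultilinearMap ℝ (fun _ : ι => V) ℂ} (hf : IsComplexMultilinear J f)
    (σ : ι ≃ ι') : IsComplexMultilinear J (f.domDomCongr σ) := by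
  intro v i
  simp only [MultilinearMap.domDomCongr_apply]
  have := hf (v ∘ σ) (σ.symm i)
  rwa [comp_apply, σ.apply_symm_apply, ← update_comp_equiv] at this

lemma smul {S : Type*} [Monoid S] [DistribMulAction S ℂ] [SMulCommClass ℝ S ℂ]
    [SMulCommClass S ℂ ℂ] {f : MultilinearMap ℝ (fun _ : ι => V) ℂ}
    (hf : IsComplexMultilinear J f) (c : S) : IsComplexMultilinear J (c • f) := by
  intro v i
  rw [smul_apply, smul_apply, hf, mul_smul_comm]

lemma sum {κ : Type*} (s : Finset κ) {f : κ → MultilinearMap ℝ (fun _ : ι => V) ℂ}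
    (hf : ∀ k ∈ s, IsComplexMultilinear J (f k)) : IsComplexMultilinear J (∑ k ∈ s, f k) := by
  intro v i
  simp only [sum_apply, Finset.mul_sum]
  exact Finset.sum_congr rfl fun k hk => hf k hk v i

lemma mul'_domCoprod {f : MultilinearMap ℝ (fun _ : ι => V) ℂ}
    {g : MultilinearMap ℝ (fun _ : ι' => V) ℂ}
    (hf : IsComplexMultilinear J f) (hg : IsComplexMultilinear J g) :
    IsComplexMultilinear J ((LinearMap.mul' ℝ ℂ).compMultilinearMap (f.domCoprod g)) := by
  rintro v (i | i)
  · simp only [LinearMap.compMultilinearMap_apply, MultilinearMap.domCoprod_apply,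
      LinearMap.mul'_apply]
    rw [update_comp_eq_of_injective' v Sum.inl_injective, hf,
      update_comp_eq_of_notMem_range' v _ (by simp), mul_assoc]
  · simp only [LinearMap.compMultilinearMap_apply, MultilinearMap.domCoprod_apply,
      LinearMap.mul'_apply]
    rw [update_comp_eq_of_injective' v Sum.inr_injective, hg,
      update_comp_eq_of_notMem_range' v _ (by simp), mul_left_comm]

lemma mul'_domCoprod_summand {p q : ℕ} {a : V [⋀^Fin p]→ₗ[ℝ] ℂ} {b : V [⋀^Fin q]→ₗ[ℝ] ℂ}
    (ha : IsComplexMultilinear J a.toMultilinearMap)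
    (hb : IsComplexMultilinear J b.toMultilinearMap)
    (σ : Equiv.Perm.ModSumCongr (Fin p) (Fin q)) :
    IsComplexMultilinear J
      ((LinearMap.mul' ℝ ℂ).compMultilinearMap (AlternatingMap.domCoprod.summand a b σ)) := by
  induction σ using Quotient.inductionOn' with
  | h σ =>
    rw [AlternatingMap.domCoprod.summand_mk'', LinearMap.compMultilinearMap_smul,
      ← LinearMap.compMultilinearMap_domDomCongr]
    exact ((mul'_domCoprod ha hb).domDomCongr σ).smul _

lemma cwedge {p q : ℕ} {a : V [⋀^Fin p]→ₗ[ℝ] ℂ} {b : V [⋀^Fin q]→ₗ[ℝ] ℂ}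
    (ha : IsComplexMultilinear J a.toMultilinearMap)
    (hb : IsComplexMultilinear J b.toMultilinearMap) :
    IsComplexMultilinear J (SUnPaper.cwedge a b).toMultilinearMap := by
  have : (SUnPaper.cwedge a b).toMultilinearMap = (∑ σ, (LinearMap.mul' ℝ ℂ).compMultilinearMap
      (AlternatingMap.domCoprod.summand a b σ)).domDomCongr finSumFinEquiv := by
    ext v
    simp only [SUnPaper.cwedge, AlternatingMap.coe_multilinearMap,
      AlternatingMap.domDomCongr_apply, LinearMap.compAlternatingMap_apply,
      AlternatingMap.domCoprod_apply, sum_apply, map_sum, MultilinearMap.domDomCongr_apply,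
      LinearMap.compMultilinearMap_apply, comp_def]
  rw [this]
  exact (sum _ fun σ _ => mul'_domCoprod_summand ha hb σ).domDomCongr _

lemma cprod : ∀ {k : ℕ} {f : Fin k → V [⋀^Fin 1]→ₗ[ℝ] ℂ},
    (∀ j, IsComplexMultilinear J (f j).toMultilinearMap) →
      IsComplexMultilinear J (SUnPaper.cprod k f).toMultilinearMap
  | 0, _, _ => fun _ i => i.elim0
  | _ + 1, _, hf => (cprod fun _ => hf _).cwedge (hf _)

lemma cOneForm {f : V →ₗ[ℝ] ℂ} (hf : ∀ w, f (J w) = I * f w) :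
    IsComplexMultilinear J (SUnPaper.cOneForm f).toMultilinearMap := by
  intro v i
  obtain rfl : i = 0 := Subsingleton.elim _ _
  simp [SUnPaper.cOneForm, hf]

end IsComplexMultilinear

lemma cplxPair_apply_J {J : V →ₗ[ℝ] V} (hJ : ∀ v : V, J (J v) = -v)
    (hJorth : ∀ v w : V, ⟪J v, J w⟫ = ⟪v, w⟫) (x w : V) :
    cplxPair x (J x) (J w) = I * cplxPair x (J x) w := by
  have hskew : ⟪J w, x⟫ = -⟪w, J x⟫ := by
    rw [← hJorth w (J x), hJ, inner_neg_right, neg_neg]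
  simp only [cplxPair, LinearMap.add_apply, LinearMap.comp_apply, LinearMap.smul_apply,
    AlgHom.toLinearMap_apply, Complex.ofRealAm_coe, LinearMap.flip_apply, innerₗ_apply_apply,
    smul_eq_mul, hskew, hJorth]
  push_cast
  linear_combination -(⟪w, J x⟫ : ℂ) * I_sq

lemma isComplexMultilinear_Psi {n : ℕ} {J : V →ₗ[ℝ] V} (hJ : ∀ v : V, J (J v) = -v)
    (hJorth : ∀ v w : V, ⟪J v, J w⟫ = ⟪v, w⟫) (e : Fin n → V) :
    IsComplexMultilinear J (Psi n J e).toMultilinearMap :=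
  IsComplexMultilinear.cprod fun j => .cOneForm (cplxPair_apply_J hJ hJorth (e j))

lemma ic_psiP_eq_ic_psiM {n : ℕ} {J : V →ₗ[ℝ] V} (hJ : ∀ v : V, J (J v) = -v)
    (hJorth : ∀ v w : V, ⟪J v, J w⟫ = ⟪v, w⟫) (e : Fin n → V) (x : V) :
    ic x (psiP n J e) = ic (J x) (psiM n J e) := by
  cases n with
  | zero => rfl
  | succ n =>
    ext v
    have h := isComplexMultilinear_Psi hJ hJorth e (Fin.cons x v) 0
    simp only [AlternatingMap.coe_multilinearMap, Fin.cons_zero, Fin.update_cons_zero] at h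
    show (Psi (n + 1) J e (Fin.cons x v)).re = (Psi (n + 1) J e (Fin.cons (J x) v)).im
    rw [h, mul_im, I_re, I_im]
    ring

theorem W4_descriptions_agree_general
{V : Type*} [NormedAddCommGroup V] [InnerProductSpace ℝ V]
    (n : ℕ)
    (J : V →ₗ[ℝ] V) (hJ : ∀ v : V, J (J v) = -v)
    (hJorth : ∀ v w : V, ⟪J v, J w⟫ = ⟪v, w⟫)
    (bas : OrthonormalBasis (Fin n ⊕ Fin n) ℝ V)
    (ω : V [⋀^Fin 2]→ₗ[ℝ] ℝ)
    (ψp ψm : V [⋀^Fin n]→ₗ[ℝ] ℝ)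
    (hψp : ψp = psiP n J (fun j => bas (Sum.inl j)))
    (hψm : ψm = psiM n J (fun j => bas (Sum.inl j))) :
    {F : V → V [⋀^Fin (n - 1 - 1 + 2)]→ₗ[ℝ] ℝ |
        ∃ x : V, F = fun X => wedge (ic X (ic x ψp)) ω}
      = {F | ∃ x : V, F = fun X => wedge (ic X (ic x ψm)) ω} := by
  have key (x : V) : ic x ψp = ic (J x) ψm := by
    rw [hψp, hψm]
    exact ic_psiP_eq_ic_psiM hJ hJorth _ x
  ext F
  constructor
  · rintro ⟨x, rfl⟩
    exact ⟨J x, by simp only [key]⟩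
  · rintro ⟨x, rfl⟩
    exact ⟨-J x, by simp only [key, map_neg, hJ, neg_neg]⟩

/-- for n ≥ 2,
{X ↦ ((x∧X)⌟ψ₊)∧ω : x ∈ V} = {X ↦ ((x∧X)⌟ψ₋)∧ω : x ∈ V}. -/
theorem W4_descriptions_agree
{V : Type*} [NormedAddCommGroup V] [InnerProductSpace ℝ V]
    [FiniteDimensional ℝ V] (n : ℕ) (hdim : Module.finrank ℝ V = 2 * n)
    (J : V →ₗ[ℝ] V) (hJ : ∀ v : V, J (J v) = -v)
    (hJorth : ∀ v w : V, ⟪J v, J w⟫ = ⟪v, w⟫)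
    (bas : OrthonormalBasis (Fin n ⊕ Fin n) ℝ V)
    (hbas : ∀ j : Fin n, bas (Sum.inr j) = J (bas (Sum.inl j)))
    (ω : V [⋀^Fin 2]→ₗ[ℝ] ℝ) (hω : ∀ x y : V, ω ![x, y] = ⟪x, J y⟫)
    (ψp ψm : V [⋀^Fin n]→ₗ[ℝ] ℝ)
    (hψp : ψp = psiP n J (fun j => bas (Sum.inl j)))
    (hψm : ψm = psiM n J (fun j => bas (Sum.inl j)))
    (hn : 2 ≤ n) :
    {F : V → V [⋀^Fin (n - 1 - 1 + 2)]→ₗ[ℝ] ℝ |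
        ∃ x : V, F = fun X => wedge (ic X (ic x ψp)) ω}
      = {F | ∃ x : V, F = fun X => wedge (ic X (ic x ψm)) ω} :=
  W4_descriptions_agree_general n J hJ hJorth bas ω ψp ψm hψp hψm

end SUnPaper
end
end
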